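/- Let δ be a regular cardinal and B a Boolean algebra such that every subset of B of cardinality < δ has a supremum in B, and every antichain of B has cardinality < δ. Then B is a complete Boolean algebra: every subset of B has a supremum. -/
import Mathlib


universe u

open Cardinal

/-- Let `δ` be a regular cardinal and `B` a Boolean algebra in which every subset of
cardinality `< δ` has a supremum, and in which every antichain (a set of nonzero
pairwise-incompatible elements) has cardinality `< δ`.  Then `B` is a complete Boolean
algebra: every subset of `B` has a supremum. -/
theorem complete_of_small_sups_of_cc {B : Type u} [BooleanAlgebra B]
    (δ : Cardinal.{u}) (hδ : δ.IsRegular)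
    (hsup : ∀ A : Set B, #A < δ → ∃ s, IsLUB A s)
    (hcc : ∀ A : Set B, (∀ a ∈ A, a ≠ ⊥) →
      (A.Pairwise fun a b => a ⊓ b = ⊥) → #A < δ) :
    ∀ A : Set B, ∃ s, IsLUB A s := by
  intro A
  set S : Set (Set B) :=
    {D : Set B | (∀ d ∈ D, d ≠ ⊥ ∧ ∃ a ∈ A, d ≤ a) ∧ D.Pairwise fun a b => a ⊓ b = ⊥}
  have hzorn : ∃ D, Maximal (· ∈ S) D := by
    apply zorn_subset
    intro c hcS hchain
    refine ⟨⋃₀ c, ⟨?_, ?_⟩, fun s hs => Set.subset_sUnion_of_mem hs⟩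
    · rintro d ⟨t, htc, hdt⟩
      exact (hcS htc).1 d hdt
    · intro x ⟨t, htc, hxt⟩ y ⟨t', ht'c, hyt'⟩ hxy
      rcases hchain.total htc ht'c with h | h
      · exact (hcS ht'c).2 (h hxt) hyt' hxy
      · exact (hcS htc).2 hxt (h hyt') hxy
  obtain ⟨D, hmax⟩ := hzorn
  obtain ⟨hD1, hD2⟩ := hmax.prop
  obtain ⟨s, hs⟩ := hsup D (hcc D (fun d hd => (hD1 d hd).1) hD2)
  refine ⟨s, ⟨?_, ?_⟩⟩
  · -- s is an upper bound of A
    intro a ha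
    by_contra hle
    have hne : a \ s ≠ ⊥ := fun h => hle (sdiff_eq_bot_iff.mp h)
    have hdisj : ∀ d ∈ D, d ⊓ (a \ s) = ⊥ := by
      intro d hd
      have : Disjoint s (a \ s) := disjoint_sdiff_self_right
      exact (this.mono_left (hs.1 hd)).eq_bot
    have hmem : insert (a \ s) D ∈ S := by
      constructor
      · rintro d (rfl | hd)
        · exact ⟨hne, a, ha, sdiff_le⟩
        · exact hD1 d hd
      · refine hD2.insert ?_
        intro d hd hne'
        exact ⟨by rw [inf_comm]; exact hdisj d hd, hdisj d hd⟩
    have heq := hmax.eq_of_ge hmem (Set.subset_insert _ _)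
    have hmem' : a \ s ∈ D := heq ▸ Set.mem_insert _ _
    have : a \ s = ⊥ := by
      have h1 := hs.1 hmem'
      have h2 : Disjoint s (a \ s) := disjoint_sdiff_self_right
      exact disjoint_self.mp (h2.mono_left h1)
    exact hne this
  · -- s is least
    intro u hu
    refine hs.2 fun d hd => ?_
    obtain ⟨_, a, ha, hda⟩ := hD1 d hd
    exact hda.trans (hu ha)
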